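/- arXiv:2412.12315 — 6 statements merged into one kernel-verified Lean document; each statement's English description precedes it below -/
import Mathlib

section
/- Let λ1, λ2, β, θ, m, d_T, d_I, d_V, d_E, d_c be positive real numbers and set R0 = m·β·λ1·λ2/(d_V·d_E·d_T). Let J0 be the real 5×5 matrix with rows (−d_T, 0, −β·λ1·λ2/(d_T·d_E), 0, 0), (0, −d_I, β·λ1·λ2/(d_T·d_E), 0, 0), (0, m·d_I, −d_V, 0, 0), (0, 0, −β·λ1·λ2·θ/(d_T·d_E), −d_E, 0), (0, 0, 0, 0, −d_c). Then every complex eigenvalue of J0 has negative real part if and only if R0 < 1. -/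
open Polynomial

/-!
The columns of `T`, `E` and `C` in `J0` contain only their diagonal entries, so the characteristic
polynomial factors as `(X + dT) (X + dE) (X + dc) ((X + dI) (X + dV) - k)` with
`k = m dI β λ1 λ2 / (dT dE)`. The linear factors have the negative roots `-dT, -dE, -dc`.
For the quadratic `X² + (dI + dV) X + (dI dV - k)` with positive linear coefficient, every root
lies in the open left half-plane exactly when its constant term is positive: non-real roots have
real part `-(dI + dV)/2`, and a nonpositive constant term forces a nonnegative real root.
Finally `dI dV - k = dI dV (1 - R0)`.
-/

theorem re_neg_of_sq_add_mul_add_eq_zero {b c : ℝ} (hb : 0 < b) (hc : 0 < c) {z : ℂ}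
    (hz : z ^ 2 + b * z + c = 0) : z.re < 0 := by
  have hre := congrArg Complex.re hz
  have him := congrArg Complex.im hz
  simp only [pow_two, Complex.add_re, Complex.add_im, Complex.mul_re, Complex.mul_im,
    Complex.ofReal_re, Complex.ofReal_im, Complex.zero_re, Complex.zero_im] at hre him
  have : z.im * (2 * z.re + b) = 0 := by linarith
  rcases mul_eq_zero.1 this with him0 | hsum
  · rw [him0] at hre
    nlinarith
  · linarith

theorem exists_nonneg_sq_add_mul_add_eq_zero (b : ℝ) {c : ℝ} (hc : c ≤ 0) :
    ∃ x : ℝ, 0 ≤ x ∧ x ^ 2 + b * x + c = 0 := by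
  have hdisc : 0 ≤ b ^ 2 - 4 * c := by nlinarith [sq_nonneg b]
  refine ⟨(-b + √(b ^ 2 - 4 * c)) / 2, ?_, ?_⟩
  · have : |b| ≤ √(b ^ 2 - 4 * c) := by
      rw [← Real.sqrt_sq_eq_abs]
      exact Real.sqrt_le_sqrt (by linarith)
    linarith [le_abs_self b]
  · linear_combination Real.sq_sqrt hdisc / 4

theorem forall_isRoot_re_neg_X_add_C_mul_iff {a : ℝ} (ha : 0 < a) (p : ℂ[X]) :
    (∀ z, ((X + C (a : ℂ)) * p).IsRoot z → z.re < 0) ↔ ∀ z, p.IsRoot z → z.re < 0 := by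
  simp only [IsRoot.def, eval_mul, eval_add, eval_X, eval_C, mul_eq_zero]
  refine ⟨fun h z hz => h z (Or.inr hz), fun h z hz => hz.elim (fun hlin => ?_) (h z)⟩
  rw [eq_neg_of_add_eq_zero_left hlin, Complex.neg_re, Complex.ofReal_re]
  linarith

theorem forall_isRoot_re_neg_quadratic_iff {p q : ℝ} (hp : 0 < p) (hq : 0 < q) (k : ℝ) :
    (∀ z, ((X + C (p : ℂ)) * (X + C (q : ℂ)) - C (k : ℂ)).IsRoot z → z.re < 0) ↔ k < p * q := by
  have hroot : ∀ z : ℂ, ((X + C (p : ℂ)) * (X + C (q : ℂ)) - C (k : ℂ)).IsRoot z ↔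
      z ^ 2 + ((p + q : ℝ) : ℂ) * z + ((p * q - k : ℝ) : ℂ) = 0 := by
    intro z
    simp only [IsRoot.def, eval_sub, eval_mul, eval_add, eval_X, eval_C]
    push_cast
    constructor <;> intro h <;> linear_combination h
  simp only [hroot]
  constructor
  · intro h
    by_contra! hk
    obtain ⟨x, hx, hxroot⟩ := exists_nonneg_sq_add_mul_add_eq_zero (p + q) (sub_nonpos.2 hk)
    have := h x (by exact_mod_cast hxroot)
    rw [Complex.ofReal_re] at this
    linarith
  · intro hk z hz
    exact re_neg_of_sq_add_mul_add_eq_zero (by linarith) (sub_pos.2 hk) hz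

theorem charpoly_jacobian_at_diseaseFree {R : Type*} [CommRing R] (a b c e p q r s : R) :
    (!![-a, 0, -b, 0, 0;
        0, -p, b, 0, 0;
        0, r, -q, 0, 0;
        0, 0, -s, -e, 0;
        0, 0, 0, 0, -c] : Matrix (Fin 5) (Fin 5) R).charpoly =
      (X + C a) * ((X + C e) * ((X + C c) * ((X + C p) * (X + C q) - C (r * b)))) := by
  rw [Matrix.charpoly, Matrix.det_succ_row_zero]
  simp [Fin.sum_univ_succ, Matrix.det_succ_row_zero, Fin.succAbove, Matrix.charmatrix_apply,
    Matrix.diagonal_apply]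
  ring

theorem stmt0_general (lam1 lam2 beta theta m dT dI dV dE dc : ℝ)
    (hdT : 0 < dT) (hdI : 0 < dI) (hdV : 0 < dV) (hdE : 0 < dE)
    (hdc : 0 < dc)
    (R0 : ℝ) (hR0 : R0 = m * beta * lam1 * lam2 / (dV * dE * dT))
    (J0 : Matrix (Fin 5) (Fin 5) ℝ)
    (hJ0 : J0 = !![-dT, 0, -beta*lam1*lam2/(dT*dE), 0, 0;
                   0, -dI, beta*lam1*lam2/(dT*dE), 0, 0;
                   0, m*dI, -dV, 0, 0;
                   0, 0, -beta*lam1*lam2*theta/(dT*dE), -dE, 0;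
                   0, 0, 0, 0, -dc]) :
    (∀ z : ℂ, (J0.charpoly.map (algebraMap ℝ ℂ)).IsRoot z → z.re < 0) ↔ R0 < 1 := by
  subst hJ0 hR0
  simp only [neg_mul, neg_div]
  rw [charpoly_jacobian_at_diseaseFree]
  simp only [Polynomial.map_mul, Polynomial.map_sub, Polynomial.map_add, map_X, map_C,
    Complex.coe_algebraMap]
  rw [forall_isRoot_re_neg_X_add_C_mul_iff hdT, forall_isRoot_re_neg_X_add_C_mul_iff hdE,
    forall_isRoot_re_neg_X_add_C_mul_iff hdc, forall_isRoot_re_neg_quadratic_iff hdI hdV]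
  have hk : m * dI * (beta * lam1 * lam2 / (dT * dE)) =
      dI * dV * (m * beta * lam1 * lam2 / (dV * dE * dT)) := by
    field_simp
  rw [hk, mul_lt_iff_lt_one_right (by positivity)]

theorem stmt0 (lam1 lam2 beta theta m dT dI dV dE dc : ℝ)
    (hlam1 : 0 < lam1) (hlam2 : 0 < lam2) (hbeta : 0 < beta) (htheta : 0 < theta)
    (hm : 0 < m) (hdT : 0 < dT) (hdI : 0 < dI) (hdV : 0 < dV) (hdE : 0 < dE)
    (hdc : 0 < dc)
    (R0 : ℝ) (hR0 : R0 = m * beta * lam1 * lam2 / (dV * dE * dT))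
    (J0 : Matrix (Fin 5) (Fin 5) ℝ)
    (hJ0 : J0 = !![-dT, 0, -beta*lam1*lam2/(dT*dE), 0, 0;
                   0, -dI, beta*lam1*lam2/(dT*dE), 0, 0;
                   0, m*dI, -dV, 0, 0;
                   0, 0, -beta*lam1*lam2*theta/(dT*dE), -dE, 0;
                   0, 0, 0, 0, -dc]) :
    (∀ z : ℂ, (J0.charpoly.map (algebraMap ℝ ℂ)).IsRoot z → z.re < 0) ↔ R0 < 1 :=
  stmt0_general lam1 lam2 beta theta m dT dI dV dE dc hdT hdI hdV hdE hdc R0 hR0 J0 hJ0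
end

section
/- Let λ1, λ2, β, θ, m, d_T, d_I, d_V, d_E, d_c be positive real numbers and set R0 = m·β·λ1·λ2/(d_V·d_E·d_T). Let J0 be the real 5×5 matrix with rows (−d_T, 0, −β·λ1·λ2/(d_T·d_E), 0, 0), (0, −d_I, β·λ1·λ2/(d_T·d_E), 0, 0), (0, m·d_I, −d_V, 0, 0), (0, 0, −β·λ1·λ2·θ/(d_T·d_E), −d_E, 0), (0, 0, 0, 0, −d_c). Then the characteristic polynomial of J0 equals (X + d_T)(X + d_E)(X + d_c)·(X² + (d_V + d_I)X + d_I·d_V·(1 − R0)). -/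
/-!
The columns of `J0` belonging to `T`, `E` and `C` have no entries off the diagonal, so Laplace
expansion along them splits off the factors `X + dT`, `X + dE`, `X + dc`. What is left is the
characteristic polynomial of the `(I, V)` block, whose determinant
`dI * dV - m * dI * beta * lam1 * lam2 / (dT * dE)` is `dI * dV * (1 - R0)`.
-/

open Polynomial Matrix

namespace Matrix

variable {R : Type*} [CommRing R]

theorem charmatrix_submatrix {m n : Type*} [DecidableEq m] [DecidableEq n] [Fintype m]
    [Fintype n] (M : Matrix n n R) {f : m → n} (hf : Function.Injective f) :
    (M.submatrix f f).charmatrix = M.charmatrix.submatrix f f := by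
  ext i j : 1
  obtain rfl | hij := eq_or_ne i j
  · simp [charmatrix_apply_eq]
  · simp [charmatrix_apply_ne _ _ _ hij, charmatrix_apply_ne _ _ _ (hf.ne hij)]

theorem charpoly_eq_X_sub_C_mul_of_column_eq_zero {n : ℕ}
    (M : Matrix (Fin (n + 1)) (Fin (n + 1)) R) (j : Fin (n + 1)) (h : ∀ i ≠ j, M i j = 0) :
    M.charpoly = (X - C (M j j)) * (M.submatrix j.succAbove j.succAbove).charpoly := by
  rw [charpoly, det_succ_column _ j, Finset.sum_eq_single j, charmatrix_apply_eq,
    charpoly, charmatrix_submatrix _ Fin.succAbove_right_injective, ← two_mul, pow_mul]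
  · simp
  · intro i _ hij
    simp [charmatrix_apply_ne _ _ _ hij, h i hij]
  · simp

end Matrix

theorem stmt1_general (lam1 lam2 beta theta m dT dI dV dE dc : ℝ)
    (hdV : 0 < dV)
    (R0 : ℝ) (hR0 : R0 = m * beta * lam1 * lam2 / (dV * dE * dT))
    (J0 : Matrix (Fin 5) (Fin 5) ℝ)
    (hJ0 : J0 = !![-dT, 0, -beta*lam1*lam2/(dT*dE), 0, 0;
                   0, -dI, beta*lam1*lam2/(dT*dE), 0, 0;
                   0, m*dI, -dV, 0, 0;
                   0, 0, -beta*lam1*lam2*theta/(dT*dE), -dE, 0;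
                   0, 0, 0, 0, -dc]) :
    J0.charpoly =
      (X + C dT) * (X + C dE) * (X + C dc) *
        (X ^ 2 + C (dV + dI) * X + C (dI * dV * (1 - R0))) := by
  have hdet : dI * dV * (1 - R0) = dI * dV - beta * lam1 * lam2 / (dT * dE) * (m * dI) := by
    rw [hR0]
    field_simp
  subst hJ0
  rw [charpoly_eq_X_sub_C_mul_of_column_eq_zero _ 0 (by simp [Fin.forall_fin_succ]),
    charpoly_eq_X_sub_C_mul_of_column_eq_zero _ 2 (by simp [Fin.forall_fin_succ]),
    charpoly_eq_X_sub_C_mul_of_column_eq_zero _ 2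
      (by simp [Fin.forall_fin_succ, Fin.succAbove, Fin.lt_def]),
    charpoly_fin_two, hdet]
  simp [trace_fin_two, det_fin_two, Fin.succAbove, Fin.lt_def]
  ring

theorem stmt1 (lam1 lam2 beta theta m dT dI dV dE dc : ℝ)
    (hlam1 : 0 < lam1) (hlam2 : 0 < lam2) (hbeta : 0 < beta) (htheta : 0 < theta)
    (hm : 0 < m) (hdT : 0 < dT) (hdI : 0 < dI) (hdV : 0 < dV) (hdE : 0 < dE)
    (hdc : 0 < dc)
    (R0 : ℝ) (hR0 : R0 = m * beta * lam1 * lam2 / (dV * dE * dT))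
    (J0 : Matrix (Fin 5) (Fin 5) ℝ)
    (hJ0 : J0 = !![-dT, 0, -beta*lam1*lam2/(dT*dE), 0, 0;
                   0, -dI, beta*lam1*lam2/(dT*dE), 0, 0;
                   0, m*dI, -dV, 0, 0;
                   0, 0, -beta*lam1*lam2*theta/(dT*dE), -dE, 0;
                   0, 0, 0, 0, -dc]) :
    J0.charpoly =
      (X + C dT) * (X + C dE) * (X + C dc) *
        (X ^ 2 + C (dV + dI) * X + C (dI * dV * (1 - R0))) :=
  stmt1_general lam1 lam2 beta theta m dT dI dV dE dc hdV R0 hR0 J0 hJ0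
end

section
/- Let p1, p2, p3, p4, p5 be real numbers and define H(l) = l⁵ + p1·l⁴ + p2·l³ + p3·l² + p4·l + p5, a1 = −(6/25)·p1² + (3/5)·p2, b1 = −(6/25)·p1·p2 + (2/5)·p3 + (8/125)·p1³, c1 = −(3/625)·p1⁴ + (3/125)·p1²·p2 − (2/25)·p1·p3 + (1/5)·p4, and Δ0 = a1² − 4·c1. If p5 ≥ 0, b1 = 0, and Δ0 < 0, then H has no positive real root. -/
/-
With `b1 = 0`, the depressed quartic `H'(l)/5 = z⁴ + a1 z² + c1` is `(z² + a1/2)² - Δ0/4`, which is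
positive when `Δ0 < 0`. Hence `H` is strictly increasing, and `H l > H 0 = p5 ≥ 0` for `l > 0`.
-/

lemma hasDerivAt_quintic (p1 p2 p3 p4 p5 x : ℝ) :
    HasDerivAt (fun l : ℝ => l ^ 5 + p1 * l ^ 4 + p2 * l ^ 3 + p3 * l ^ 2 + p4 * l + p5)
      (5 * x ^ 4 + 4 * p1 * x ^ 3 + 3 * p2 * x ^ 2 + 2 * p3 * x + p4) x := by
  refine ((((((hasDerivAt_pow 5 x).add ((hasDerivAt_pow 4 x).const_mul p1)).add
    ((hasDerivAt_pow 3 x).const_mul p2)).add ((hasDerivAt_pow 2 x).const_mul p3)).add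
    ((hasDerivAt_id x).const_mul p4)).add_const p5).congr_deriv ?_
  norm_num
  ring

lemma quartic_eq_depressed (p1 p2 p3 p4 a b c x : ℝ)
    (ha : a = -(6/25) * p1 ^ 2 + (3/5) * p2)
    (hb : b = -(6/25) * p1 * p2 + (2/5) * p3 + (8/125) * p1 ^ 3)
    (hc : c = -(3/625) * p1 ^ 4 + (3/125) * p1 ^ 2 * p2 - (2/25) * p1 * p3 + (1/5) * p4) :
    5 * x ^ 4 + 4 * p1 * x ^ 3 + 3 * p2 * x ^ 2 + 2 * p3 * x + p4
      = 5 * ((x + p1 / 5) ^ 4 + a * (x + p1 / 5) ^ 2 + b * (x + p1 / 5) + c) := by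
  subst ha hb hc
  ring

lemma biquadratic_pos {a c : ℝ} (hdisc : a ^ 2 - 4 * c < 0) (z : ℝ) :
    0 < z ^ 4 + a * z ^ 2 + c := by
  nlinarith [sq_nonneg (z ^ 2 + a / 2)]

theorem stmt7 (p1 p2 p3 p4 p5 : ℝ)
    (H : ℝ → ℝ)
    (hH : ∀ l, H l = l ^ 5 + p1 * l ^ 4 + p2 * l ^ 3 + p3 * l ^ 2 + p4 * l + p5)
    (a1 b1 c1 Δ0 : ℝ)
    (ha1 : a1 = -(6/25) * p1 ^ 2 + (3/5) * p2)
    (hb1 : b1 = -(6/25) * p1 * p2 + (2/5) * p3 + (8/125) * p1 ^ 3)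
    (hc1 : c1 = -(3/625) * p1 ^ 4 + (3/125) * p1 ^ 2 * p2 - (2/25) * p1 * p3 + (1/5) * p4)
    (hΔ0 : Δ0 = a1 ^ 2 - 4 * c1)
    (hp5 : 0 ≤ p5) (hb10 : b1 = 0) (hΔ0neg : Δ0 < 0) :
    ∀ l : ℝ, 0 < l → H l ≠ 0 := by
  have hderiv (x : ℝ) :
      HasDerivAt H (5 * x ^ 4 + 4 * p1 * x ^ 3 + 3 * p2 * x ^ 2 + 2 * p3 * x + p4) x := by
    rw [funext hH]
    exact hasDerivAt_quintic p1 p2 p3 p4 p5 x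
  have hmono : StrictMono H := strictMono_of_deriv_pos fun x => by
    rw [(hderiv x).deriv, quartic_eq_depressed p1 p2 p3 p4 a1 b1 c1 x ha1 hb1 hc1, hb10,
      zero_mul, add_zero]
    exact mul_pos (by norm_num) (biquadratic_pos (hΔ0 ▸ hΔ0neg) _)
  intro l hl
  have h0 : H 0 = p5 := by simp [hH]
  exact (hp5.trans_lt (h0 ▸ hmono hl)).ne'
end

section
/- Let m1, m2, m3, m4, m5, n1, n2, n3, n4, n5 and τ2 be real numbers, and for ξ ∈ ℂ define ψ(ξ) = ξ⁵ + m1·ξ⁴ + m2·ξ³ + m3·ξ² + m4·ξ + m5 + e^{−ξτ2}·(n1·ξ⁴ + n2·ξ³ + n3·ξ² + n4·ξ + n5). Define p1 = m1² − 2m2 − n1², p2 = m2² + 2m4 − 2m1·m3 − n2² + 2n1·n3, p3 = m3² + 2m1·m5 − 2m2·m4 − 2n1·n5 + 2n2·n4 − n3², p4 = m4² − 2m3·m5 + 2n3·n5 − n4², p5 = m5² − n5². If ω is a real number with ψ(iω) = 0, then ω^10 + p1·ω^8 + p2·ω^6 + p3·ω^4 + p4·ω² + p5 = 0. -/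
theorem stmt12 (m1 m2 m3 m4 m5 n1 n2 n3 n4 n5 τ2 : ℝ)
    (ψ : ℂ → ℂ)
    (hψ : ∀ ξ : ℂ, ψ ξ = ξ ^ 5 + (m1 : ℂ) * ξ ^ 4 + (m2 : ℂ) * ξ ^ 3 + (m3 : ℂ) * ξ ^ 2 +
        (m4 : ℂ) * ξ + (m5 : ℂ) +
        Complex.exp (-ξ * (τ2 : ℂ)) *
          ((n1 : ℂ) * ξ ^ 4 + (n2 : ℂ) * ξ ^ 3 + (n3 : ℂ) * ξ ^ 2 + (n4 : ℂ) * ξ + (n5 : ℂ)))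
    (p1 p2 p3 p4 p5 : ℝ)
    (hp1 : p1 = m1 ^ 2 - 2 * m2 - n1 ^ 2)
    (hp2 : p2 = m2 ^ 2 + 2 * m4 - 2 * m1 * m3 - n2 ^ 2 + 2 * n1 * n3)
    (hp3 : p3 = m3 ^ 2 + 2 * m1 * m5 - 2 * m2 * m4 - 2 * n1 * n5 + 2 * n2 * n4 - n3 ^ 2)
    (hp4 : p4 = m4 ^ 2 - 2 * m3 * m5 + 2 * n3 * n5 - n4 ^ 2)
    (hp5 : p5 = m5 ^ 2 - n5 ^ 2)
    (ω : ℝ) (hroot : ψ ((ω : ℂ) * Complex.I) = 0) :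
    ω ^ 10 + p1 * ω ^ 8 + p2 * ω ^ 6 + p3 * ω ^ 4 + p4 * ω ^ 2 + p5 = 0 := by
  rw [hψ] at hroot
  set z : ℂ := (ω : ℂ) * Complex.I with hz
  set A : ℂ := z ^ 5 + (m1 : ℂ) * z ^ 4 + (m2 : ℂ) * z ^ 3 + (m3 : ℂ) * z ^ 2 +
      (m4 : ℂ) * z + (m5 : ℂ) with hA
  set B : ℂ := (n1 : ℂ) * z ^ 4 + (n2 : ℂ) * z ^ 3 + (n3 : ℂ) * z ^ 2 + (n4 : ℂ) * z +
      (n5 : ℂ) with hB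
  have hAB : A = -(Complex.exp (-z * (τ2 : ℂ)) * B) := by
    linear_combination hroot
  have habs : Complex.normSq A = Complex.normSq B := by
    rw [hAB, Complex.normSq_neg, Complex.normSq_mul]
    have h1 : Complex.normSq (Complex.exp (-z * (τ2 : ℂ))) = 1 := by
      rw [Complex.normSq_eq_norm_sq, Complex.norm_exp]
      have : (-z * (τ2 : ℂ)).re = 0 := by simp [hz]
      rw [this]; simp
    rw [h1, one_mul]
  have hArw : A = ((m1 * ω ^ 4 - m3 * ω ^ 2 + m5 : ℝ) : ℂ) +
      ((ω ^ 5 - m2 * ω ^ 3 + m4 * ω : ℝ) : ℂ) * Complex.I := by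
    rw [hA, hz]
    have h3 : Complex.I ^ 3 = -Complex.I := by
      rw [pow_succ, Complex.I_sq]; ring
    have h5 : Complex.I ^ 5 = Complex.I := by
      rw [show (5:ℕ) = 2+3 by rfl, pow_add, h3, Complex.I_sq]; ring
    have h2 : Complex.I ^ 2 = -1 := Complex.I_sq
    have h4 : Complex.I ^ 4 = 1 := by
      rw [show (4:ℕ) = 2+2 by rfl, pow_add, Complex.I_sq]; ring
    push_cast
    ring_nf
    simp only [h2, h3, h4, h5]
    ring
  have hBrw : B = ((n1 * ω ^ 4 - n3 * ω ^ 2 + n5 : ℝ) : ℂ) +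
      ((-(n2 * ω ^ 3) + n4 * ω : ℝ) : ℂ) * Complex.I := by
    rw [hB, hz]
    have h3 : Complex.I ^ 3 = -Complex.I := by
      rw [pow_succ, Complex.I_sq]; ring
    have h2 : Complex.I ^ 2 = -1 := Complex.I_sq
    have h4 : Complex.I ^ 4 = 1 := by
      rw [show (4:ℕ) = 2+2 by rfl, pow_add, Complex.I_sq]; ring
    push_cast
    ring_nf
    simp only [h2, h3, h4]
    ring
  rw [hArw, hBrw] at habs
  simp only [Complex.normSq_add_mul_I] at habs
  subst hp1 hp2 hp3 hp4 hp5
  nlinarith [habs]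
end

section
/- Let m1, m2, m3, m4, m5, n1, n2, n3, n4, n5 be real numbers and define p1 = m1² − 2m2 − n1², p2 = m2² + 2m4 − 2m1·m3 − n2² + 2n1·n3, p3 = m3² + 2m1·m5 − 2m2·m4 − 2n1·n5 + 2n2·n4 − n3², p4 = m4² − 2m3·m5 + 2n3·n5 − n4², p5 = m5² − n5². Suppose ω0 > 0 is a real number satisfying ω0^10 + p1·ω0^8 + p2·ω0^6 + p3·ω0^4 + p4·ω0² + p5 = 0 and (n1·ω0⁴ − n3·ω0² + n5)² + (n2·ω0³ − n4·ω0)² ≠ 0. Then there exists τ2 ≥ 0 such that ψ(iω0) = 0, where ψ(ξ) = ξ⁵ + m1·ξ⁴ + m2·ξ³ + m3·ξ² + m4·ξ + m5 + e^{−ξτ2}·(n1·ξ⁴ + n2·ξ³ + n3·ξ² + n4·ξ + n5). -/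
/-!
Write `ψ(iω0) = P + e^{-iω0τ} Q`. As `τ` runs over `[0, ∞)`, `e^{-iω0τ}` sweeps the whole unit
circle, so a root exists as soon as `Q ≠ 0` and `|P| = |Q|`. Splitting `P` and `Q` into real and
imaginary parts, `|P|² - |Q|²` is exactly the degree-10 polynomial evaluated at `ω0`.
-/

open Complex

theorem exists_nonneg_exp_neg_mul_I_mul_eq {z : ℂ} (hz : ‖z‖ = 1) {ω : ℝ} (hω : 0 < ω) :
    ∃ τ : ℝ, 0 ≤ τ ∧ exp (-((ω : ℂ) * I) * (τ : ℂ)) = z := by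
  -- `arg z ≤ π`, so one extra full turn makes the delay nonnegative
  refine ⟨(2 * Real.pi - arg z) / ω, div_nonneg ?_ hω.le, ?_⟩
  · linarith [arg_le_pi z, Real.pi_pos]
  · have hω' : (ω : ℂ) ≠ 0 := ofReal_ne_zero.mpr hω.ne'
    have hexponent : -((ω : ℂ) * I) * (((2 * Real.pi - arg z) / ω : ℝ) : ℂ) =
        (arg z : ℂ) * I - 2 * Real.pi * I := by
      push_cast
      field_simp
      ring
    conv_rhs => rw [← norm_mul_exp_arg_mul_I z, hz]
    rw [hexponent, exp_sub, exp_two_pi_mul_I, div_one, ofReal_one, one_mul]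

theorem exists_nonneg_delay_add_exp_mul_eq_zero {P Q : ℂ} (hQ : Q ≠ 0) (hPQ : ‖P‖ = ‖Q‖)
    {ω : ℝ} (hω : 0 < ω) :
    ∃ τ : ℝ, 0 ≤ τ ∧ P + exp (-((ω : ℂ) * I) * (τ : ℂ)) * Q = 0 := by
  have hnorm : ‖-P / Q‖ = 1 := by
    rw [norm_div, norm_neg, hPQ, div_self (norm_ne_zero_iff.mpr hQ)]
  obtain ⟨τ, hτ, hexp⟩ := exists_nonneg_exp_neg_mul_I_mul_eq hnorm hω
  refine ⟨τ, hτ, ?_⟩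
  rw [hexp, div_mul_cancel₀ _ hQ, add_neg_cancel]

theorem monic_quintic_eval_mul_I (a1 a2 a3 a4 a5 ω : ℝ) :
    ((ω : ℂ) * I) ^ 5 + (a1 : ℂ) * ((ω : ℂ) * I) ^ 4 + (a2 : ℂ) * ((ω : ℂ) * I) ^ 3 +
        (a3 : ℂ) * ((ω : ℂ) * I) ^ 2 + (a4 : ℂ) * ((ω : ℂ) * I) + (a5 : ℂ) =
      ((a1 * ω ^ 4 - a3 * ω ^ 2 + a5 : ℝ) : ℂ) +
        ((ω ^ 5 - a2 * ω ^ 3 + a4 * ω : ℝ) : ℂ) * I := by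
  push_cast
  linear_combination ((ω : ℂ) ^ 5 * I * (I ^ 2 - 1) + (a1 : ℂ) * (ω : ℂ) ^ 4 * (I ^ 2 - 1) +
    (a2 : ℂ) * (ω : ℂ) ^ 3 * I + (a3 : ℂ) * (ω : ℂ) ^ 2) * I_sq

theorem quartic_eval_mul_I (b1 b2 b3 b4 b5 ω : ℝ) :
    (b1 : ℂ) * ((ω : ℂ) * I) ^ 4 + (b2 : ℂ) * ((ω : ℂ) * I) ^ 3 +
        (b3 : ℂ) * ((ω : ℂ) * I) ^ 2 + (b4 : ℂ) * ((ω : ℂ) * I) + (b5 : ℂ) =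
      ((b1 * ω ^ 4 - b3 * ω ^ 2 + b5 : ℝ) : ℂ) + ((-(b2 * ω ^ 3 - b4 * ω) : ℝ) : ℂ) * I := by
  push_cast
  linear_combination ((b1 : ℂ) * (ω : ℂ) ^ 4 * (I ^ 2 - 1) + (b2 : ℂ) * (ω : ℂ) ^ 3 * I +
    (b3 : ℂ) * (ω : ℂ) ^ 2) * I_sq

theorem stmt13 (m1 m2 m3 m4 m5 n1 n2 n3 n4 n5 : ℝ)
    (p1 p2 p3 p4 p5 : ℝ)
    (hp1 : p1 = m1 ^ 2 - 2 * m2 - n1 ^ 2)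
    (hp2 : p2 = m2 ^ 2 + 2 * m4 - 2 * m1 * m3 - n2 ^ 2 + 2 * n1 * n3)
    (hp3 : p3 = m3 ^ 2 + 2 * m1 * m5 - 2 * m2 * m4 - 2 * n1 * n5 + 2 * n2 * n4 - n3 ^ 2)
    (hp4 : p4 = m4 ^ 2 - 2 * m3 * m5 + 2 * n3 * n5 - n4 ^ 2)
    (hp5 : p5 = m5 ^ 2 - n5 ^ 2)
    (ω0 : ℝ) (hω0 : 0 < ω0)
    (heq : ω0 ^ 10 + p1 * ω0 ^ 8 + p2 * ω0 ^ 6 + p3 * ω0 ^ 4 + p4 * ω0 ^ 2 + p5 = 0)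
    (hne : (n1 * ω0 ^ 4 - n3 * ω0 ^ 2 + n5) ^ 2 + (n2 * ω0 ^ 3 - n4 * ω0) ^ 2 ≠ 0) :
    ∃ τ2 : ℝ, 0 ≤ τ2 ∧
      ((ω0 : ℂ) * Complex.I) ^ 5 + (m1 : ℂ) * ((ω0 : ℂ) * Complex.I) ^ 4 +
        (m2 : ℂ) * ((ω0 : ℂ) * Complex.I) ^ 3 + (m3 : ℂ) * ((ω0 : ℂ) * Complex.I) ^ 2 +
        (m4 : ℂ) * ((ω0 : ℂ) * Complex.I) + (m5 : ℂ) +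
        Complex.exp (-((ω0 : ℂ) * Complex.I) * (τ2 : ℂ)) *
          ((n1 : ℂ) * ((ω0 : ℂ) * Complex.I) ^ 4 + (n2 : ℂ) * ((ω0 : ℂ) * Complex.I) ^ 3 +
            (n3 : ℂ) * ((ω0 : ℂ) * Complex.I) ^ 2 + (n4 : ℂ) * ((ω0 : ℂ) * Complex.I) +
            (n5 : ℂ)) = 0 := by
  rw [monic_quintic_eval_mul_I, quartic_eval_mul_I]
  apply exists_nonneg_delay_add_exp_mul_eq_zero _ _ hω0
  · rw [← normSq_pos, normSq_add_mul_I, neg_sq]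
    exact lt_of_le_of_ne (by positivity) hne.symm
  · rw [norm_def, norm_def, normSq_add_mul_I, normSq_add_mul_I]
    congr 1
    subst hp1 hp2 hp3 hp4 hp5
    linear_combination heq
end

section
/- Let m1, m2, m3, m4, m5, n1, n2, n3, n4, n5 be real numbers and define p1 = m1² − 2m2 − n1², p2 = m2² + 2m4 − 2m1·m3 − n2² + 2n1·n3, p3 = m3² + 2m1·m5 − 2m2·m4 − 2n1·n5 + 2n2·n4 − n3², p4 = m4² − 2m3·m5 + 2n3·n5 − n4², p5 = m5² − n5². For τ2 ≥ 0 and ξ ∈ ℂ define ψ(ξ, τ2) = ξ⁵ + m1·ξ⁴ + m2·ξ³ + m3·ξ² + m4·ξ + m5 + e^{−ξτ2}·(n1·ξ⁴ + n2·ξ³ + n3·ξ² + n4·ξ + n5). Assume: (i) every ξ ∈ ℂ with ψ(ξ, 0) = 0 satisfies Re ξ < 0; (ii) no ω > 0 satisfies ω^10 + p1·ω^8 + p2·ω^6 + p3·ω^4 + p4·ω² + p5 = 0; and (iii) m5 + n5 ≠ 0. Then for every τ2 ≥ 0, every ξ ∈ ℂ with ψ(ξ, τ2) = 0 satisfies Re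 ξ < 0. -/
/-!
Write `ψ(ξ, τ) = ξ⁵ + P(ξ) + e^{-ξτ} Q(ξ)` and let `A` be the set of delays `τ ≥ 0` for which
`ψ(·, τ)` has a zero in the closed right half-plane. Such zeros are bounded uniformly in `τ`, so
`A` is closed. Since `|e^{-iωτ}| = 1`, a zero `iω` forces `|(iω)⁵ + P(iω)|² = |Q(iω)|²`, and the
difference of the two sides is the degree-10 crossing polynomial; together with
`ψ(0, τ) = m5 + n5` this rules out zeros on the imaginary axis. So a zero for `τ₀ ∈ A` lies in the
open right half-plane, and by the minimum modulus principle (a Hurwitz-type argument) it persists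
for all delays near `τ₀`: `A` is open. Stability at `τ = 0` gives `0 ∉ A`, so `A` is a clopen
subset of `ℝ` missing the negative reals, hence empty.
-/

open Complex Metric Filter Topology Function Set

theorem IsClosed.setOf_exists_mem_of_isCompact {X Y : Type*} [TopologicalSpace X]
    [TopologicalSpace Y] {S : Set (X × Y)} (hS : IsClosed S) {K : Set Y} (hK : IsCompact K) :
    IsClosed {x | ∃ y ∈ K, (x, y) ∈ S} := by
  rw [← isOpen_compl_iff, isOpen_iff_eventually]
  intro x hx
  simp only [mem_compl_iff, mem_ofPred_eq, not_exists, not_and] at hx ⊢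
  exact hK.eventually_forall_of_forall_eventually fun y hy => hS.isOpen_compl.mem_nhds (hx y hy)

theorem le_norm_center_of_forall_mem_sphere {f : ℂ → ℂ} {c : ℂ} {r m : ℝ} (hr : 0 < r)
    (hm : 0 < m) (hf : DifferentiableOn ℂ f (closedBall c r))
    (hf₀ : ∀ z ∈ closedBall c r, f z ≠ 0) (hsphere : ∀ z ∈ sphere c r, m ≤ ‖f z‖) :
    m ≤ ‖f c‖ := by
  have hinv : DiffContOnCl ℂ (fun z => (f z)⁻¹) (ball c r) :=
    (hf.inv hf₀).diffContOnCl_ball subset_rfl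
  have hfrontier : ∀ z ∈ frontier (ball c r), ‖(f z)⁻¹‖ ≤ m⁻¹ := by
    intro z hz
    rw [frontier_ball c hr.ne'] at hz
    rw [norm_inv]
    exact inv_anti₀ hm (hsphere z hz)
  have hc := norm_le_of_forall_mem_frontier_norm_le isBounded_ball hinv hfrontier
    (subset_closure (mem_ball_self hr))
  rw [norm_inv] at hc
  exact (inv_le_inv₀ (norm_pos_iff.2 (hf₀ c (mem_closedBall_self hr.le))) hm).1 hc

theorem exists_sphere_forall_ne_zero {f : ℂ → ℂ} (hf : Differentiable ℂ f) (hne : ∃ z, f z ≠ 0)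
    (z₀ : ℂ) {ε : ℝ} (hε : 0 < ε) : ∃ r, 0 < r ∧ r < ε ∧ ∀ z ∈ sphere z₀ r, f z ≠ 0 := by
  rcases (hf.analyticAt z₀).eventually_eq_zero_or_eventually_ne_zero with hzero | hnz
  · obtain ⟨z, hz⟩ := hne
    exact absurd (AnalyticOnNhd.eqOn_zero_of_preconnected_of_eventuallyEq_zero
      (fun w _ => hf.analyticAt w) isPreconnected_univ (mem_univ z₀) hzero (mem_univ z)) hz
  · obtain ⟨δ, hδ, hball⟩ := Metric.eventually_nhds_iff.1 (eventually_nhdsWithin_iff.1 hnz)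
    refine ⟨min δ ε / 2, by positivity, by linarith [min_le_right δ ε], fun z hz => ?_⟩
    rw [mem_sphere] at hz
    have hr : 0 < min δ ε / 2 := by positivity
    exact hball (by linarith [min_le_left δ ε]) (fun h => by rw [h, dist_self] at hz; linarith)

theorem eventually_exists_mem_ball_eq_zero {X : Type*} [TopologicalSpace X] {f : ℂ → X → ℂ}
    (hcont : Continuous (uncurry f)) (hdiff : ∀ x, Differentiable ℂ (f · x)) {z₀ : ℂ} {x₀ : X}
    (hz₀ : f z₀ x₀ = 0) (hne : ∃ z, f z x₀ ≠ 0) {ε : ℝ} (hε : 0 < ε) :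
    ∀ᶠ x in 𝓝 x₀, ∃ z ∈ ball z₀ ε, f z x = 0 := by
  obtain ⟨r, hr, hrε, hsphere⟩ := exists_sphere_forall_ne_zero (hdiff x₀) hne z₀ hε
  obtain ⟨z₁, hz₁, hmin⟩ := (isCompact_sphere z₀ r).exists_isMinOn
    (NormedSpace.sphere_nonempty.2 hr.le) ((hdiff x₀).continuous.norm.continuousOn)
  set m := ‖f z₁ x₀‖
  have hm : 0 < m := norm_pos_iff.2 (hsphere z₁ hz₁)
  have hclose : ∀ᶠ x in 𝓝 x₀, ∀ z ∈ closedBall z₀ r, ‖f z x - f z x₀‖ < m / 2 := by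
    refine (isCompact_closedBall z₀ r).eventually_forall_of_forall_eventually fun z _ => ?_
    have hg : Continuous fun p : X × ℂ => ‖f p.2 p.1 - f p.2 x₀‖ :=
      ((hcont.comp (continuous_snd.prodMk continuous_fst)).sub
        (hcont.comp (continuous_snd.prodMk continuous_const))).norm
    exact hg.continuousAt.eventually_lt continuousAt_const (by simpa using half_pos hm)
  filter_upwards [hclose] with x hx
  by_contra! hzero
  have hcenter := le_norm_center_of_forall_mem_sphere hr (half_pos hm) (hdiff x).differentiableOn
    (fun z hz => hzero z (closedBall_subset_ball hrε hz)) fun z hz => by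
      have h₁ : m ≤ ‖f z x₀‖ := hmin hz
      have h₂ := norm_sub_norm_le (f z x₀) (f z x)
      rw [norm_sub_rev] at h₂
      linarith [hx z (sphere_subset_closedBall hz)]
  have hcenter_small := hx z₀ (mem_closedBall_self hr.le)
  rw [hz₀, sub_zero] at hcenter_small
  linarith

theorem re_pos_of_mem_ball {z₀ z : ℂ} (hz : z ∈ ball z₀ z₀.re) : 0 < z.re := by
  have h := (abs_re_le_norm (z - z₀)).trans_lt (mem_ball_iff_norm.1 hz)
  rw [sub_re] at h
  linarith [neg_abs_le (z.re - z₀.re)]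

theorem re_neg_of_eq_zero_of_forall_mul_I_ne_zero {f : ℂ → ℝ → ℂ}
    (hcont : Continuous (uncurry f)) (hdiff : ∀ τ, Differentiable ℂ (f · τ))
    (hbound : ∃ R, ∀ τ, 0 ≤ τ → ∀ z, 0 ≤ z.re → f z τ = 0 → ‖z‖ ≤ R)
    (himag : ∀ τ, 0 ≤ τ → ∀ y : ℝ, f (y * I) τ ≠ 0) (hstable : ∀ z, f z 0 = 0 → z.re < 0)
    {τ : ℝ} (hτ : 0 ≤ τ) {z : ℂ} (hz : f z τ = 0) : z.re < 0 := by
  set A := {τ : ℝ | 0 ≤ τ ∧ ∃ z : ℂ, 0 ≤ z.re ∧ f z τ = 0}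
  have hclosed : IsClosed A := by
    obtain ⟨R, hR⟩ := hbound
    have hS : IsClosed {p : ℝ × ℂ | 0 ≤ p.1 ∧ 0 ≤ p.2.re ∧ f p.2 p.1 = 0} :=
      (isClosed_le continuous_const continuous_fst).inter
        ((isClosed_le continuous_const (continuous_re.comp continuous_snd)).inter
          (isClosed_eq (hcont.comp continuous_swap) continuous_const))
    convert hS.setOf_exists_mem_of_isCompact (isCompact_closedBall (0 : ℂ) R) using 1
    ext τ
    constructor
    · rintro ⟨hτ, z, hre, hz⟩
      exact ⟨z, mem_closedBall_zero_iff.2 (hR τ hτ z hre hz), hτ, hre, hz⟩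
    · rintro ⟨z, -, hτ, hre, hz⟩
      exact ⟨hτ, z, hre, hz⟩
  have hopen : IsOpen A := by
    refine isOpen_iff_mem_nhds.2 fun τ₀ ⟨hτ₀, z₀, hre, hz₀⟩ => ?_
    have hre_pos : 0 < z₀.re := by
      refine hre.lt_of_ne fun h => himag τ₀ hτ₀ z₀.im ?_
      rwa [show (z₀.im : ℂ) * I = z₀ from Complex.ext (by simp [← h]) (by simp)]
    have hτ₀_pos : 0 < τ₀ :=
      hτ₀.lt_of_ne fun h => (hstable z₀ (h ▸ hz₀)).not_ge hre
    have hne : ∃ z, f z τ₀ ≠ 0 := ⟨0, by simpa using himag τ₀ hτ₀ 0⟩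
    filter_upwards [eventually_exists_mem_ball_eq_zero hcont hdiff hz₀ hne hre_pos,
      lt_mem_nhds hτ₀_pos] with τ ⟨z, hz, hzτ⟩ hτ
    exact ⟨hτ.le, z, (re_pos_of_mem_ball hz).le, hzτ⟩
  have hA : A = ∅ := (isClopen_iff.1 ⟨hclosed, hopen⟩).resolve_right fun h =>
    (show (-1 : ℝ) ∉ A from fun hA => absurd hA.1 (by norm_num)) (h ▸ mem_univ _)
  by_contra! hre
  exact hA.subset ⟨hτ, z, hre, hz⟩

def quartic (a b c d e : ℝ) (z : ℂ) : ℂ := a * z ^ 4 + b * z ^ 3 + c * z ^ 2 + d * z + e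

theorem norm_quartic_le (a b c d e : ℝ) {z : ℂ} (hz : 1 ≤ ‖z‖) :
    ‖quartic a b c d e z‖ ≤ (|a| + |b| + |c| + |d| + |e|) * ‖z‖ ^ 4 := by
  have h₁ : ‖z‖ ≤ ‖z‖ ^ 4 := le_self_pow₀ hz (by norm_num)
  have h₂ : ‖z‖ ^ 2 ≤ ‖z‖ ^ 4 := pow_le_pow_right₀ hz (by norm_num)
  have h₃ : ‖z‖ ^ 3 ≤ ‖z‖ ^ 4 := pow_le_pow_right₀ hz (by norm_num)
  have h₀ : 1 ≤ ‖z‖ ^ 4 := one_le_pow₀ hz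
  calc ‖quartic a b c d e z‖
      ≤ ‖(a : ℂ) * z ^ 4‖ + ‖(b : ℂ) * z ^ 3‖ + ‖(c : ℂ) * z ^ 2‖ + ‖(d : ℂ) * z‖ + ‖(e : ℂ)‖ := by
        unfold quartic
        grw [norm_add_le, norm_add_le, norm_add_le, norm_add_le]
    _ = |a| * ‖z‖ ^ 4 + |b| * ‖z‖ ^ 3 + |c| * ‖z‖ ^ 2 + |d| * ‖z‖ + |e| := by
        simp only [norm_mul, norm_pow, norm_real, Real.norm_eq_abs]
    _ ≤ _ := by
        nlinarith [abs_nonneg a, abs_nonneg b, abs_nonneg c, abs_nonneg d, abs_nonneg e]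

section DelayCharacteristic

variable (m1 m2 m3 m4 m5 n1 n2 n3 n4 n5 : ℝ)

noncomputable def delayCharFun (ξ : ℂ) (τ : ℝ) : ℂ :=
  ξ ^ 5 + quartic m1 m2 m3 m4 m5 ξ + exp (-ξ * τ) * quartic n1 n2 n3 n4 n5 ξ

def crossingPoly (ω : ℝ) : ℝ :=
  ω ^ 10 + (m1 ^ 2 - 2 * m2 - n1 ^ 2) * ω ^ 8 +
    (m2 ^ 2 + 2 * m4 - 2 * m1 * m3 - n2 ^ 2 + 2 * n1 * n3) * ω ^ 6 +
    (m3 ^ 2 + 2 * m1 * m5 - 2 * m2 * m4 - 2 * n1 * n5 + 2 * n2 * n4 - n3 ^ 2) * ω ^ 4 +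
    (m4 ^ 2 - 2 * m3 * m5 + 2 * n3 * n5 - n4 ^ 2) * ω ^ 2 + (m5 ^ 2 - n5 ^ 2)

theorem norm_le_of_delayCharFun_eq_zero {ξ : ℂ} {τ : ℝ} (hre : 0 ≤ ξ.re) (hτ : 0 ≤ τ)
    (h : delayCharFun m1 m2 m3 m4 m5 n1 n2 n3 n4 n5 ξ τ = 0) :
    ‖ξ‖ ≤ 1 + (|m1| + |m2| + |m3| + |m4| + |m5|) + (|n1| + |n2| + |n3| + |n4| + |n5|) := by
  set M := |m1| + |m2| + |m3| + |m4| + |m5|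
  set N := |n1| + |n2| + |n3| + |n4| + |n5|
  have hN : 0 ≤ N := by positivity
  rcases le_or_gt ‖ξ‖ 1 with h₁ | h₁
  · linarith [show 0 ≤ M by positivity]
  have hexp : ‖exp (-ξ * τ)‖ ≤ 1 := by
    rw [norm_exp, Real.exp_le_one_iff]
    simpa using mul_nonneg hre hτ
  have hξ5 : ξ ^ 5 = -(quartic m1 m2 m3 m4 m5 ξ + exp (-ξ * τ) * quartic n1 n2 n3 n4 n5 ξ) := by
    unfold delayCharFun at h
    linear_combination h
  have hpow : ‖ξ‖ * ‖ξ‖ ^ 4 ≤ (M + N) * ‖ξ‖ ^ 4 := calc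
    ‖ξ‖ * ‖ξ‖ ^ 4 = ‖quartic m1 m2 m3 m4 m5 ξ + exp (-ξ * τ) * quartic n1 n2 n3 n4 n5 ξ‖ := by
      rw [← pow_succ', ← norm_pow, hξ5, norm_neg]
    _ ≤ ‖quartic m1 m2 m3 m4 m5 ξ‖ + ‖exp (-ξ * τ)‖ * ‖quartic n1 n2 n3 n4 n5 ξ‖ := by
      rw [← norm_mul]
      exact norm_add_le _ _
    _ ≤ M * ‖ξ‖ ^ 4 + 1 * (N * ‖ξ‖ ^ 4) := by
      gcongr
      · exact norm_quartic_le _ _ _ _ _ h₁.le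
      · exact norm_quartic_le _ _ _ _ _ h₁.le
    _ = (M + N) * ‖ξ‖ ^ 4 := by ring
  linarith [le_of_mul_le_mul_right hpow (by positivity)]

theorem normSq_sub_normSq_quartic_mul_I (ω : ℝ) :
    normSq ((ω * I) ^ 5 + quartic m1 m2 m3 m4 m5 (ω * I)) -
      normSq (quartic n1 n2 n3 n4 n5 (ω * I)) = crossingPoly m1 m2 m3 m4 m5 n1 n2 n3 n4 n5 ω := by
  have hP : (ω * I) ^ 5 + quartic m1 m2 m3 m4 m5 (ω * I) =
      ⟨m1 * ω ^ 4 - m3 * ω ^ 2 + m5, ω ^ 5 - m2 * ω ^ 3 + m4 * ω⟩ := by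
    apply Complex.ext <;> simp [quartic, pow_succ, sub_eq_add_neg, add_assoc]
  have hQ : quartic n1 n2 n3 n4 n5 (ω * I) =
      ⟨n1 * ω ^ 4 - n3 * ω ^ 2 + n5, -n2 * ω ^ 3 + n4 * ω⟩ := by
    apply Complex.ext <;> simp [quartic, pow_succ, sub_eq_add_neg, add_assoc]
  rw [hP, hQ, normSq_mk, normSq_mk, crossingPoly]
  ring

theorem delayCharFun_mul_I_ne_zero
    (hnoroot : ¬ ∃ ω : ℝ, 0 < ω ∧ crossingPoly m1 m2 m3 m4 m5 n1 n2 n3 n4 n5 ω = 0)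
    (hconst : m5 + n5 ≠ 0) (ω τ : ℝ) :
    delayCharFun m1 m2 m3 m4 m5 n1 n2 n3 n4 n5 (ω * I) τ ≠ 0 := by
  intro h
  rcases eq_or_ne ω 0 with rfl | hω
  · simp only [delayCharFun, quartic] at h
    exact hconst (by exact_mod_cast (by simpa using h : (m5 : ℂ) + n5 = 0))
  have hnorm : ‖(ω * I) ^ 5 + quartic m1 m2 m3 m4 m5 (ω * I)‖ =
      ‖quartic n1 n2 n3 n4 n5 (ω * I)‖ := by
    rw [delayCharFun, add_eq_zero_iff_eq_neg] at h
    rw [h, norm_neg, norm_mul, show ‖exp (-(ω * I) * τ)‖ = 1 by simp [norm_exp], one_mul]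
  refine hnoroot ⟨|ω|, abs_pos.2 hω, ?_⟩
  have heven : crossingPoly m1 m2 m3 m4 m5 n1 n2 n3 n4 n5 |ω| =
      crossingPoly m1 m2 m3 m4 m5 n1 n2 n3 n4 n5 ω := by
    simp only [crossingPoly, Even.pow_abs (by decide : Even 10), Even.pow_abs (by decide : Even 8),
      Even.pow_abs (by decide : Even 6), Even.pow_abs (by decide : Even 4),
      Even.pow_abs (by decide : Even 2)]
  rw [heven, ← normSq_sub_normSq_quartic_mul_I, normSq_eq_norm_sq, normSq_eq_norm_sq, hnorm,
    sub_self]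

end DelayCharacteristic

theorem stmt14 (m1 m2 m3 m4 m5 n1 n2 n3 n4 n5 : ℝ)
    (p1 p2 p3 p4 p5 : ℝ)
    (hp1 : p1 = m1 ^ 2 - 2 * m2 - n1 ^ 2)
    (hp2 : p2 = m2 ^ 2 + 2 * m4 - 2 * m1 * m3 - n2 ^ 2 + 2 * n1 * n3)
    (hp3 : p3 = m3 ^ 2 + 2 * m1 * m5 - 2 * m2 * m4 - 2 * n1 * n5 + 2 * n2 * n4 - n3 ^ 2)
    (hp4 : p4 = m4 ^ 2 - 2 * m3 * m5 + 2 * n3 * n5 - n4 ^ 2)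
    (hp5 : p5 = m5 ^ 2 - n5 ^ 2)
    (ψ : ℂ → ℝ → ℂ)
    (hψ : ∀ (ξ : ℂ) (τ2 : ℝ), ψ ξ τ2 =
        ξ ^ 5 + (m1 : ℂ) * ξ ^ 4 + (m2 : ℂ) * ξ ^ 3 + (m3 : ℂ) * ξ ^ 2 +
          (m4 : ℂ) * ξ + (m5 : ℂ) +
          Complex.exp (-ξ * (τ2 : ℂ)) *
            ((n1 : ℂ) * ξ ^ 4 + (n2 : ℂ) * ξ ^ 3 + (n3 : ℂ) * ξ ^ 2 + (n4 : ℂ) * ξ + (n5 : ℂ)))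
    (hstable0 : ∀ ξ : ℂ, ψ ξ 0 = 0 → ξ.re < 0)
    (hnoroot : ¬ ∃ ω : ℝ, 0 < ω ∧
        ω ^ 10 + p1 * ω ^ 8 + p2 * ω ^ 6 + p3 * ω ^ 4 + p4 * ω ^ 2 + p5 = 0)
    (hconst : m5 + n5 ≠ 0) :
    ∀ τ2 : ℝ, 0 ≤ τ2 → ∀ ξ : ℂ, ψ ξ τ2 = 0 → ξ.re < 0 := by
  subst hp1 hp2 hp3 hp4 hp5
  obtain rfl : ψ = delayCharFun m1 m2 m3 m4 m5 n1 n2 n3 n4 n5 := by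
    funext ξ τ
    rw [hψ, delayCharFun, quartic, quartic]
    ring
  intro τ hτ ξ hξ
  exact re_neg_of_eq_zero_of_forall_mul_I_ne_zero
    (by unfold delayCharFun quartic; fun_prop) (by unfold delayCharFun quartic; fun_prop)
    ⟨_, fun τ hτ z hre hz => norm_le_of_delayCharFun_eq_zero _ _ _ _ _ _ _ _ _ _ hre hτ hz⟩
    (fun τ _ ω => delayCharFun_mul_I_ne_zero _ _ _ _ _ _ _ _ _ _ hnoroot hconst ω τ)
    hstable0 hτ hξ
end
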